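/- Reduction from strict codirect solutions to the intersection of a regular relation with the subsequence relation: let σ, σ' : A → Option B be alphabetic morphisms and M : NFA A Q a Mathlib NFA. Define a binary relation R on List (Option B) by: (u, v) ∈ R iff there exist w ∈ M.accepts, lists us, us' : List (List (Option B)) with us.length = us'.length = w.length, and r : ℕ, such that for every i < w.length: (us.get i).filterMap id = (σ (w.get i)).toList, (us'.get i).filterMap id = (σ' (w.get i)).toList, and (us.get i).length = (us'.get i).length; and u = us.flatten and v = us'.flatten ++ List.replicate r none. Then: (a) if (u, v) ∈ R and u is a sublist (List.Sublist) of v, then there exists w ∈ M.accepts with w.filterMap σ a sublist of w.filterMap σ'; (b) if M has a strict codirect solution with respect to (σ, σ'), then there exists (u, v) ∈ R with u a sublist of v. -/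

import Mathlib

/-- `w` is a strict codirect solution with respect to the alphabetic morphisms
`σ, σ' : A → Option B`, witnessed by `vs`. -/
def AlphStrictCodirectWitness {A B : Type*} (σ σ' : A → Option B)
    (w : List A) (vs : List (List B)) : Prop :=
  ∃ h : vs.length = w.length,
    (∀ k, ∀ hk : k < w.length,
      (vs.get ⟨k, by omega⟩).Sublist (σ' (w.get ⟨k, hk⟩)).toList) ∧
    w.filterMap σ = vs.flatten ∧
    (∀ k ≤ w.length, ((vs.take k).flatten).length ≤ ((w.take k).filterMap σ).length) ∧
    ∀ k, 1 ≤ k → k < w.length →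
      ((vs.take k).flatten).length < ((w.take k).filterMap σ).length

/-!
Each letter of `w` becomes a pair of blocks of equal length, the `σ`-block carrying `σ a` and the
`σ'`-block carrying `σ' a`, both padded with `none`. For (a) one erases the `none`s: a sublist of
padded words stays a sublist after `filterMap id`. For (b) one builds the blocks letter by letter,
maintaining `u <+ v ++ T`, where `T` holds the letters that `σ` has produced but the witness has
not matched yet, interleaved with the `none`s emitted after them. Since `σ` leads, a matched letter
is always at the front of `T` (after some `none`s, which are moved behind the new blocks); at the
end `T` contains only `none`s and becomes the trailing `replicate r none`.
-/

section

variable {A B : Type*}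

open List

theorem List.filterMap_singleton_eq_toList {α β : Type*} (f : α → Option β) (a : α) :
    [a].filterMap f = (f a).toList := by
  cases h : f a <;> simp [h]

theorem List.map_eq_map_iff_getElem {α β γ : Type*} {f : α → γ} {g : β → γ} {l : List α}
    {l' : List β} :
    l.map f = l'.map g ↔ ∃ h : l.length = l'.length, ∀ i (hi : i < l'.length),
      f (l[i]'(h ▸ hi)) = g l'[i] := by
  rw [List.ext_getElem_iff]
  simp only [length_map, getElem_map]
  exact ⟨fun ⟨h, hf⟩ => ⟨h, fun i hi => hf i (by omega) (by simpa using hi)⟩,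
    fun ⟨h, hf⟩ => ⟨h, fun i _ hi => hf i (by simpa using hi)⟩⟩

theorem filterMap_id_flatten_eq {σ : A → Option B} {w : List A} {us : List (List (Option B))}
    (h : us.map (filterMap id) = w.map fun a => (σ a).toList) :
    us.flatten.filterMap id = w.filterMap σ := by
  rw [filterMap_flatten, h, List.filterMap_eq_flatMap_toList, List.flatMap_def]

theorem exists_blocks_of_cons_eq (x : B) (P : List B) (s : Option B) :
    ∀ T : List (Option B), x :: P = T.filterMap id ++ s.toList →
      ∃ U V T' : List (Option B), U.filterMap id = s.toList ∧ V.filterMap id = [x] ∧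
        U.length = V.length ∧ T'.filterMap id = P ∧ T ++ U <+ V ++ T'
  | [], h => by
    cases s with
    | none => simp at h
    | some y =>
      obtain ⟨rfl, rfl⟩ : x = y ∧ P = [] := by simpa using h
      exact ⟨[some x], [some x], [], rfl, rfl, rfl, rfl, Sublist.refl _⟩
  | some y :: T, h => by
    obtain ⟨rfl, rfl⟩ : x = y ∧ P = T.filterMap id ++ s.toList := by simpa using h
    exact ⟨[s], [some x], T ++ [s], filterMap_singleton_eq_toList id s, rfl, rfl,
      by rw [filterMap_append, filterMap_singleton_eq_toList, id], by simp⟩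
  | none :: T, h => by
    obtain ⟨U, V, T', hU, hV, hUV, hT', hsub⟩ := exists_blocks_of_cons_eq x P s T (by simpa using h)
    refine ⟨U ++ [none], none :: V, T' ++ [none], by simpa using hU, by simpa using hV,
      by simpa using hUV, by simpa using hT', ?_⟩
    simpa using (hsub.append_right [none]).cons_cons none

theorem exists_blocks_step (T : List (Option B)) (s t : Option B) (c : List B)
    (hc : c <+ t.toList) (hpre : c <+: T.filterMap id ++ s.toList) :
    ∃ U V T' : List (Option B), U.filterMap id = s.toList ∧ V.filterMap id = t.toList ∧
      U.length = V.length ∧ c ++ T'.filterMap id = T.filterMap id ++ s.toList ∧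
      T ++ U <+ V ++ T' := by
  obtain rfl | ⟨x, rfl, rfl⟩ : c = [] ∨ ∃ x, t = some x ∧ c = [x] := by
    cases t <;> simp_all [List.sublist_singleton]
  · refine ⟨[s], [t], T ++ [s], filterMap_singleton_eq_toList id s,
      filterMap_singleton_eq_toList id t, rfl, ?_, ?_⟩
    · rw [nil_append, filterMap_append, filterMap_singleton_eq_toList, id]
    · exact sublist_cons_self t _
  · obtain ⟨P, hP⟩ := hpre
    obtain ⟨U, V, T', hU, hV, hUV, hT', hsub⟩ := exists_blocks_of_cons_eq x P s T hP
    exact ⟨U, V, T', hU, hV, hUV, by rw [hT', ← hP, singleton_append], hsub⟩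

theorem exists_blocks_of_prefix (σ σ' : A → Option B) (w : List A) (vs : List (List B))
    (hlen : vs.length = w.length)
    (hsub : ∀ k (hk : k < w.length), vs[k] <+ (σ' w[k]).toList)
    (hlead : ∀ k ≤ w.length, (vs.take k).flatten <+: (w.take k).filterMap σ) :
    ∀ k ≤ w.length, ∃ (us us' : List (List (Option B))) (T : List (Option B)),
      us.map (filterMap id) = (w.take k).map (fun a => (σ a).toList) ∧
      us'.map (filterMap id) = (w.take k).map (fun a => (σ' a).toList) ∧
      us.map length = us'.map length ∧
      (vs.take k).flatten ++ T.filterMap id = (w.take k).filterMap σ ∧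
      us.flatten <+ us'.flatten ++ T
  | 0, _ => ⟨[], [], [], by simp⟩
  | k + 1, hk => by
    obtain ⟨us, us', T, hσ, hσ', hus, hT, hsubl⟩ :=
      exists_blocks_of_prefix σ σ' w vs hlen hsub hlead k (by omega)
    have hw : w.take (k + 1) = w.take k ++ [w[k]] := (take_append_getElem _).symm
    have hv : vs.take (k + 1) = vs.take k ++ [vs[k]] := (take_append_getElem _).symm
    have hpre : vs[k] <+: T.filterMap id ++ (σ w[k]).toList := by
      have := hlead (k + 1) hk
      rwa [hw, hv, flatten_append, filterMap_append, ← hT, append_assoc, flatten_singleton,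
        filterMap_singleton_eq_toList, prefix_append_right_inj] at this
    obtain ⟨U, V, T', hU, hV, hUV, hT', hsubUV⟩ :=
      exists_blocks_step T (σ w[k]) (σ' w[k]) vs[k] (hsub k (by omega)) hpre
    refine ⟨us ++ [U], us' ++ [V], T', ?_, ?_, ?_, ?_, ?_⟩
    · rw [hw, map_append, map_append, hσ, map_singleton, map_singleton, hU]
    · rw [hw, map_append, map_append, hσ', map_singleton, map_singleton, hV]
    · simp [hus, hUV]
    · rw [hv, hw, flatten_append, filterMap_append, flatten_singleton, append_assoc, hT', ← hT,
        append_assoc, filterMap_singleton_eq_toList]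
    · simpa using (hsubl.append_right U).trans (by simpa using hsubUV.append_left us'.flatten)

theorem AlphStrictCodirectWitness.flatten_take_prefix {σ σ' : A → Option B} {w : List A}
    {vs : List (List B)} (h : AlphStrictCodirectWitness σ σ' w vs) (k : ℕ) (hk : k ≤ w.length) :
    (vs.take k).flatten <+: (w.take k).filterMap σ := by
  obtain ⟨-, -, hflat, hlead, -⟩ := h
  refine prefix_of_prefix_length_le (l₃ := vs.flatten) ?_ ?_ (hlead k hk)
  · exact ⟨(vs.drop k).flatten, by rw [← flatten_append, take_append_drop]⟩
  · exact ⟨(w.drop k).filterMap σ, by rw [← hflat, ← filterMap_append, take_append_drop]⟩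

theorem AlphStrictCodirectWitness.exists_blocks_sublist {σ σ' : A → Option B} {w : List A}
    {vs : List (List B)} (h : AlphStrictCodirectWitness σ σ' w vs) :
    ∃ (us us' : List (List (Option B))) (r : ℕ),
      us.map (filterMap id) = w.map (fun a => (σ a).toList) ∧
      us'.map (filterMap id) = w.map (fun a => (σ' a).toList) ∧
      us.map length = us'.map length ∧
      us.flatten <+ us'.flatten ++ replicate r none := by
  have hlead := h.flatten_take_prefix
  obtain ⟨hlen, hsub, hflat, -, -⟩ := h
  obtain ⟨us, us', T, hσ, hσ', hus, hT, hsubl⟩ :=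
    exists_blocks_of_prefix σ σ' w vs hlen (fun k hk => by simpa using hsub k hk) hlead
      w.length le_rfl
  rw [take_length, take_of_length_le hlen.le, ← hflat, append_right_eq_self,
    filterMap_eq_nil_iff] at hT
  refine ⟨us, us', T.length, by rwa [take_length] at hσ, by rwa [take_length] at hσ', hus, ?_⟩
  rwa [← eq_replicate_iff.mpr ⟨rfl, by simpa using hT⟩]

end

/-- Reduction from strict codirect solutions to the intersection of a regular
relation with the subsequence relation. -/
theorem strict_codirect_to_regular_subseq {A B Q : Type*}
    (σ σ' : A → Option B) (M : NFA A Q)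
    (R : Set (List (Option B) × List (Option B)))
    (hR : R = {p : List (Option B) × List (Option B) |
      ∃ w ∈ M.accepts, ∃ us us' : List (List (Option B)),
        ∃ hus : us.length = w.length, ∃ hus' : us'.length = w.length, ∃ r : ℕ,
          (∀ i, ∀ hi : i < w.length,
            (us.get ⟨i, by omega⟩).filterMap id = (σ (w.get ⟨i, hi⟩)).toList ∧
            (us'.get ⟨i, by omega⟩).filterMap id = (σ' (w.get ⟨i, hi⟩)).toList ∧
            (us.get ⟨i, by omega⟩).length = (us'.get ⟨i, by omega⟩).length) ∧
          p.1 = us.flatten ∧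
          p.2 = us'.flatten ++ List.replicate r (none : Option B)}) :
    -- (a)
    (∀ u v : List (Option B), (u, v) ∈ R → u.Sublist v →
      ∃ w ∈ M.accepts, (w.filterMap σ).Sublist (w.filterMap σ')) ∧
    -- (b)
    ((∃ w ∈ M.accepts, ∃ vs : List (List B), AlphStrictCodirectWitness σ σ' w vs) →
      ∃ u v : List (Option B), (u, v) ∈ R ∧ u.Sublist v) := by
  subst hR
  constructor
  · rintro u v ⟨w, hw, us, us', hus, hus', r, hblocks, rfl, rfl⟩ huv
    have hσ : us.map (List.filterMap id) = w.map fun a => (σ a).toList :=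
      List.map_eq_map_iff_getElem.mpr ⟨hus, fun i hi => (hblocks i hi).1⟩
    have hσ' : us'.map (List.filterMap id) = w.map fun a => (σ' a).toList :=
      List.map_eq_map_iff_getElem.mpr ⟨hus', fun i hi => (hblocks i hi).2.1⟩
    refine ⟨w, hw, ?_⟩
    have := huv.filterMap id
    rwa [List.filterMap_append, List.filterMap_replicate_of_none rfl, List.append_nil,
      filterMap_id_flatten_eq hσ, filterMap_id_flatten_eq hσ'] at this
  · rintro ⟨w, hw, vs, hvs⟩
    obtain ⟨us, us', r, hσ, hσ', hus, hsub⟩ := hvs.exists_blocks_sublist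
    obtain ⟨hlen, hσi⟩ := List.map_eq_map_iff_getElem.mp hσ
    obtain ⟨hlen', hσi'⟩ := List.map_eq_map_iff_getElem.mp hσ'
    refine ⟨_, _, ⟨w, hw, us, us', by simpa using hlen, by simpa using hlen', r,
      fun i hi => ⟨hσi i hi, hσi' i hi, ?_⟩, rfl, rfl⟩, hsub⟩
    simpa using (List.map_eq_map_iff_getElem.mp hus).2 i (by omega)
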